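/- Let $\varepsilon \in (0,1]$, $\delta, a_0, a_1 \in (0,1]$ with $a_1 = a_0 + \delta \le (1+\varepsilon/8)a_0$. Let $X_0, X_1$ be random variables in $[0,1]$ such that $X_b > 0$ implies $X_b \ge a_b$ for $b \in \{0,1\}$, and $\mathbb{E}[X_1] \ge (1+\varepsilon)\mathbb{E}[X_0]$. Then there exists a threshold $t$ with $a_0 \le t \le 1$ such that $\Pr[X_1 > t + \delta/2] \ge (1 + \varepsilon/4)(\Pr[X_0 > t] + (\varepsilon/8)\mathbb{E}[X_1])$. -/

import Mathlib

/-!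
Write `F_b(t) = Pr[X_b > t]`, so that `E[X_b] = ∫₀¹ F_b`. On `[0, a₀]` the shifted tail
`F₁(t + δ/2)` is the constant `Pr[X₁ > 0]` (as `a₀ + δ/2 < a₁`), while the right-hand side is
antitone in `t`; so if the inequality failed on `[a₀, 1]` it would fail on all of `[0, 1]`.
Integrating over `[0, 1]` would give
`E[X₁] - (δ/2) Pr[X₁ > 0] ≤ (1 + ε/4) (E[X₀] + (ε/8) E[X₁])`, and Markov's inequality
`a₁ Pr[X₁ > 0] ≤ E[X₁]` together with `δ ≤ ε a₀ / 8` and `E[X₁] ≥ (1 + ε) E[X₀]` rules this out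
as soon as `E[X₁] > 0`. When `E[X₁] = 0` the threshold `t = 1` works.
-/

open MeasureTheory Set

lemma exists_le_of_intervalIntegral_lt {f g : ℝ → ℝ} {a b : ℝ} (hab : a ≤ b)
    (hf : IntervalIntegrable f volume a b) (hg : IntervalIntegrable g volume a b)
    (h : ∫ t in a..b, g t < ∫ t in a..b, f t) : ∃ t ∈ Icc a b, g t ≤ f t := by
  by_contra! hlt
  exact h.not_ge (intervalIntegral.integral_mono_on hab hf hg fun t ht => (hlt t ht).le)

section Survival

variable {Ω : Type*} [MeasurableSpace Ω] (μ : Measure Ω) (X : Ω → ℝ)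

noncomputable def survivalFun (t : ℝ) : ℝ := μ.real {ω | t < X ω}

variable {μ X}

lemma survivalFun_nonneg (t : ℝ) : 0 ≤ survivalFun μ X t := measureReal_nonneg

lemma survivalFun_antitone [IsFiniteMeasure μ] : Antitone (survivalFun μ X) :=
  fun _ _ hst => measureReal_mono fun _ hω => hst.trans_lt hω

lemma survivalFun_eq_zero_of_le {b t : ℝ} (hb : ∀ ω, X ω ≤ b) (hbt : b ≤ t) :
    survivalFun μ X t = 0 := by
  have hempty : {ω | t < X ω} = ∅ :=
    eq_empty_of_forall_notMem fun ω hω => ((hb ω).trans hbt).not_gt hω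
  simp [survivalFun, hempty]

lemma survivalFun_eq_survivalFun_zero_of_gap {a t : ℝ} (hgap : ∀ ω, 0 < X ω → a ≤ X ω)
    (ht0 : 0 ≤ t) (hta : t < a) : survivalFun μ X t = survivalFun μ X 0 := by
  have hset : {ω | t < X ω} = {ω | 0 < X ω} :=
    ext fun ω => ⟨ht0.trans_lt, fun hω => hta.trans_le (hgap ω hω)⟩
  simp only [survivalFun, hset]

lemma integrable_of_mem_Icc [IsFiniteMeasure μ] {b : ℝ} (hX : Measurable X)
    (hr : ∀ ω, X ω ∈ Icc 0 b) : Integrable X μ :=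
  (integrable_const b).mono' hX.aestronglyMeasurable <| ae_of_all _ fun ω => by
    rw [Real.norm_eq_abs, abs_of_nonneg (hr ω).1]; exact (hr ω).2

lemma integral_eq_intervalIntegral_survivalFun [IsFiniteMeasure μ] {b : ℝ} (hb : 0 ≤ b)
    (hX : Measurable X) (hr : ∀ ω, X ω ∈ Icc 0 b) :
    ∫ ω, X ω ∂μ = ∫ t in 0..b, survivalFun μ X t := by
  have hzero : EqOn (survivalFun μ X) 0 (Ioi b) :=
    fun t ht => survivalFun_eq_zero_of_le (fun ω => (hr ω).2) ht.le
  have hint : IntegrableOn (survivalFun μ X) (Ioc 0 b) :=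
    (survivalFun_antitone.intervalIntegrable (a := 0) (b := b)).1
  rw [(integrable_of_mem_Icc hX hr).integral_eq_integral_meas_lt (ae_of_all _ fun ω => (hr ω).1)]
  change ∫ t in Ioi 0, survivalFun μ X t = _
  rw [intervalIntegral.integral_of_le hb, ← Ioc_union_Ioi_eq_Ioi hb,
    setIntegral_union (Ioc_disjoint_Ioi le_rfl) measurableSet_Ioi hint
      (integrableOn_zero.congr_fun hzero.symm measurableSet_Ioi),
    setIntegral_congr_fun measurableSet_Ioi hzero]
  simp [survivalFun]

lemma mul_survivalFun_zero_le_integral [IsFiniteMeasure μ] {a : ℝ} (ha : 0 ≤ a)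
    (hgap : ∀ ω, 0 < X ω → a ≤ X ω) (hint : Integrable X μ) (hnn : ∀ ω, 0 ≤ X ω) :
    a * survivalFun μ X 0 ≤ ∫ ω, X ω ∂μ :=
  (mul_le_mul_of_nonneg_left (measureReal_mono hgap) ha).trans
    (mul_meas_ge_le_integral_of_nonneg (ae_of_all _ hnn) hint a)

lemma intervalIntegral_survivalFun_add [IsFiniteMeasure μ] {a b s : ℝ} (hb : 0 ≤ b)
    (hX : Measurable X) (hr : ∀ ω, X ω ∈ Icc 0 b) (hgap : ∀ ω, 0 < X ω → a ≤ X ω)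
    (hs0 : 0 ≤ s) (hsa : s < a) :
    ∫ t in 0..b, survivalFun μ X (t + s) = ∫ ω, X ω ∂μ - s * survivalFun μ X 0 := by
  have hF (c d : ℝ) : IntervalIntegrable (survivalFun μ X) volume c d :=
    survivalFun_antitone.intervalIntegrable
  have h_head : ∫ t in 0..s, survivalFun μ X t = s * survivalFun μ X 0 := by
    rw [intervalIntegral.integral_congr (g := fun _ => survivalFun μ X 0),
      intervalIntegral.integral_const, sub_zero, smul_eq_mul]
    intro t ht
    rw [uIcc_of_le hs0] at ht
    exact survivalFun_eq_survivalFun_zero_of_gap hgap ht.1 (ht.2.trans_lt hsa)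
  have h_tail : ∫ t in b..b + s, survivalFun μ X t = 0 := by
    rw [intervalIntegral.integral_congr (g := fun _ => 0), intervalIntegral.integral_zero]
    intro t ht
    rw [uIcc_of_le (le_add_of_nonneg_right hs0)] at ht
    exact survivalFun_eq_zero_of_le (fun ω => (hr ω).2) ht.1
  rw [intervalIntegral.integral_comp_add_right, zero_add,
    integral_eq_intervalIntegral_survivalFun hb hX hr,
    ← intervalIntegral.integral_add_adjacent_intervals (hF 0 s) (hF s _),
    ← intervalIntegral.integral_add_adjacent_intervals (hF s b) (hF b _), h_head, h_tail]
  ring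

lemma exists_le_survivalFun_add_of_intervalIntegral_lt [IsFiniteMeasure μ] {G : ℝ → ℝ}
    (hG : Antitone G) {a₀ a s : ℝ} (hgap : ∀ ω, 0 < X ω → a ≤ X ω) (ha₀1 : a₀ ≤ 1)
    (hs0 : 0 ≤ s) (hsa : a₀ + s < a)
    (h : ∫ t in 0..1, G t < ∫ t in 0..1, survivalFun μ X (t + s)) :
    ∃ t, a₀ ≤ t ∧ t ≤ 1 ∧ G t ≤ survivalFun μ X (t + s) := by
  have hF_shift : Antitone fun t => survivalFun μ X (t + s) :=
    fun _ _ hst => survivalFun_antitone (by linarith)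
  obtain ⟨t, ⟨ht0, ht1⟩, ht⟩ := exists_le_of_intervalIntegral_lt zero_le_one
    hF_shift.intervalIntegrable hG.intervalIntegrable h
  rcases le_total a₀ t with hle | hle
  · exact ⟨t, hle, ht1, ht⟩
  -- below `a`, the survival function of `X` is flat, so `t` can be raised to `a₀`
  refine ⟨a₀, le_rfl, ha₀1, ?_⟩
  calc G a₀ ≤ G t := hG hle
    _ ≤ survivalFun μ X (t + s) := ht
    _ = survivalFun μ X (a₀ + s) := by
      rw [survivalFun_eq_survivalFun_zero_of_gap hgap (by linarith) (by linarith),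
        survivalFun_eq_survivalFun_zero_of_gap hgap (by linarith) hsa]

end Survival

lemma gap_lemma_arith {ε E₀ E₁ q : ℝ} (hε0 : 0 < ε) (hε1 : ε ≤ 1) (hE₁ : 0 < E₁)
    (hE : (1 + ε) * E₀ ≤ E₁) (hq : q ≤ ε / 16 * E₁) :
    (1 + ε / 4) * (E₀ + ε / 8 * E₁) < E₁ - q := by
  nlinarith [mul_pos hε0 hE₁, mul_le_mul_of_nonneg_left hE (by positivity : (0:ℝ) ≤ 1 + ε / 4),
    mul_nonneg (mul_nonneg hε0.le hE₁.le) (sub_nonneg.2 hε1)]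

theorem gap_lemma_general {Ω : Type*} [MeasurableSpace Ω]
    (μ : Measure Ω) [IsProbabilityMeasure μ]
    (ε δ a₀ a₁ : ℝ) (hε0 : 0 < ε) (hε1 : ε ≤ 1)
    (hδ : δ ∈ Set.Ioc (0 : ℝ) 1) (ha₀ : a₀ ∈ Set.Ioc (0 : ℝ) 1)
    (hsum : a₁ = a₀ + δ) (hclose : a₁ ≤ (1 + ε / 8) * a₀)
    (X₀ X₁ : Ω → ℝ) (hX₀ : Measurable X₀) (hX₁ : Measurable X₁)
    (hr₀ : ∀ ω, X₀ ω ∈ Set.Icc (0 : ℝ) 1) (hr₁ : ∀ ω, X₁ ω ∈ Set.Icc (0 : ℝ) 1)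
    (hgap₁ : ∀ ω, 0 < X₁ ω → a₁ ≤ X₁ ω)
    (hE : (1 + ε) * ∫ ω, X₀ ω ∂μ ≤ ∫ ω, X₁ ω ∂μ) :
    ∃ t : ℝ, a₀ ≤ t ∧ t ≤ 1 ∧
      (1 + ε / 4) * ((μ {ω | t < X₀ ω}).toReal + (ε / 8) * ∫ ω, X₁ ω ∂μ)
        ≤ (μ {ω | t + δ / 2 < X₁ ω}).toReal := by
  obtain ⟨hδ0, -⟩ := hδ
  obtain ⟨ha₀0, ha₀1⟩ := ha₀
  set E₁ := ∫ ω, X₁ ω ∂μ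
  have hE₁_nonneg : 0 ≤ E₁ := integral_nonneg fun ω => (hr₁ ω).1
  rcases hE₁_nonneg.eq_or_lt with hE₁ | hE₁
  · refine ⟨1, ha₀1, le_rfl, ?_⟩
    change (1 + ε / 4) * (survivalFun μ X₀ 1 + ε / 8 * E₁) ≤ survivalFun μ X₁ (1 + δ / 2)
    rw [← hE₁, survivalFun_eq_zero_of_le (fun ω => (hr₀ ω).2) le_rfl]
    simpa using survivalFun_nonneg (μ := μ) (X := X₁) _
  have h_head : δ / 2 * survivalFun μ X₁ 0 ≤ ε / 16 * E₁ := by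
    have hmarkov : a₁ * survivalFun μ X₁ 0 ≤ E₁ := mul_survivalFun_zero_le_integral
      (by linarith) hgap₁ (integrable_of_mem_Icc hX₁ hr₁) fun ω => (hr₁ ω).1
    have hδ_le : δ / 2 ≤ ε / 16 * a₁ := by nlinarith
    nlinarith [mul_le_mul_of_nonneg_right hδ_le (survivalFun_nonneg (μ := μ) (X := X₁) 0)]
  have h_integral_rhs : ∫ t in 0..1, (1 + ε / 4) * (survivalFun μ X₀ t + ε / 8 * E₁)
      = (1 + ε / 4) * (∫ ω, X₀ ω ∂μ + ε / 8 * E₁) := by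
    rw [intervalIntegral.integral_const_mul,
      intervalIntegral.integral_add survivalFun_antitone.intervalIntegrable intervalIntegrable_const,
      intervalIntegral.integral_const, ← integral_eq_intervalIntegral_survivalFun zero_le_one hX₀ hr₀]
    simp
  refine exists_le_survivalFun_add_of_intervalIntegral_lt
    ((survivalFun_antitone.add_const _).const_mul (by positivity)) hgap₁ ha₀1 (by positivity)
    (by linarith) ?_
  rw [h_integral_rhs, intervalIntegral_survivalFun_add zero_le_one hX₁ hr₁ hgap₁ (by positivity)
    (by linarith)]
  exact gap_lemma_arith hε0 hε1 hE₁ hE h_head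

/-- Gap lemma: let `ε ∈ (0,1]`, `δ, a₀, a₁ ∈ (0,1]` with
`a₁ = a₀ + δ ≤ (1+ε/8)·a₀`. Let `X₀, X₁` be `[0,1]`-valued random variables with
`X_b > 0 → X_b ≥ a_b` and `E[X₁] ≥ (1+ε)·E[X₀]`. Then there exists a threshold
`t ∈ [a₀, 1]` with `Pr[X₁ > t + δ/2] ≥ (1+ε/4)·(Pr[X₀ > t] + (ε/8)·E[X₁])`. -/
theorem gap_lemma {Ω : Type*} [MeasurableSpace Ω]
    (μ : Measure Ω) [IsProbabilityMeasure μ]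
    (ε δ a₀ a₁ : ℝ) (hε0 : 0 < ε) (hε1 : ε ≤ 1)
    (hδ : δ ∈ Set.Ioc (0 : ℝ) 1) (ha₀ : a₀ ∈ Set.Ioc (0 : ℝ) 1)
    (ha₁ : a₁ ∈ Set.Ioc (0 : ℝ) 1)
    (hsum : a₁ = a₀ + δ) (hclose : a₁ ≤ (1 + ε / 8) * a₀)
    (X₀ X₁ : Ω → ℝ) (hX₀ : Measurable X₀) (hX₁ : Measurable X₁)
    (hr₀ : ∀ ω, X₀ ω ∈ Set.Icc (0 : ℝ) 1) (hr₁ : ∀ ω, X₁ ω ∈ Set.Icc (0 : ℝ) 1)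
    (hgap₀ : ∀ ω, 0 < X₀ ω → a₀ ≤ X₀ ω) (hgap₁ : ∀ ω, 0 < X₁ ω → a₁ ≤ X₁ ω)
    (hE : (1 + ε) * ∫ ω, X₀ ω ∂μ ≤ ∫ ω, X₁ ω ∂μ) :
    ∃ t : ℝ, a₀ ≤ t ∧ t ≤ 1 ∧
      (1 + ε / 4) * ((μ {ω | t < X₀ ω}).toReal + (ε / 8) * ∫ ω, X₁ ω ∂μ)
        ≤ (μ {ω | t + δ / 2 < X₁ ω}).toReal :=
  gap_lemma_general μ ε δ a₀ a₁ hε0 hε1 hδ ha₀ hsum hclose X₀ X₁ hX₀ hX₁ hr₀ hr₁ hgap₁ hE
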